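/- arXiv:1811.09165 — 8 statements merged into one kernel-verified Lean document; each statement's English description precedes it below -/
import Mathlib

section
/- Let F be a finite field. For every n ≥ 1 there exist sets P ⊆ [2n+1]×[3n+1] and Q ⊆ [3n+1]×[2n+1] with the following two properties. (i) For all A ∈ F^{(2n+1)×(3n+1)} and B ∈ F^{(3n+1)×(2n+1)} with A_{i,j} = 0 for all (i,j) ∈ P, B_{i,j} = 0 for all (i,j) ∈ Q, and A·B = I_{2n+1}: the entry A_{1,3n+1} is nonzero, and for every k with 0 ≤ k ≤ n−1, at least one of the entries A_{1,3k+1} and A_{1,3k+2} equals 0. (ii) For every function v : {0,…,n−1} → {1,2} there exist such A and B (satisfying the zero constraints and A·B = I_{2n+1}) with A_{1,3k+v(k)} ≠ 0 for all 0 ≤ k ≤ n−1. -/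
/-!
Block `k` occupies rows `0, 2k+1, 2k+2` and columns `3k, 3k+1, 3k+2`. Under the zero patterns,
column `2k+1` of `B` lives in rows `3k, 3k+2`, column `2k+2` in rows `3k+1, 3k+2`, and
`A(0, 3k+2) = A(2k+1, 3k+1) = 0`. If `A(0, 3k)` and `A(0, 3k+1)` were both nonzero, row `0` of
`A B = I` would kill `B(3k, 2k+1)` and `B(3k+1, 2k+2)`; then `A(2k+1, 3k+2) B(3k+2, 2k+1) = 1`,
so row `2k+1` kills `B(3k+2, 2k+2)` and the diagonal entry `(2k+2, 2k+2)` of `A B` vanishes.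
Column `0` of `B` lives in row `3n` only, which forces `A(0, 3n) ≠ 0`.

Conversely, given `v`, each row `l ≥ 1` of `I` is produced by a column `pivotCol v n l` of its
block other than the column `3k + v k - 1` reserved for row `0`: `B` selects the pivot columns,
and `A` is the transposed selection plus the reserved entries in row `0`.
-/

open Matrix Function

namespace Matrix

variable {m k p R : Type*} [Fintype k]

theorem mul_apply_of_forall_ne_eq_zero [NonUnitalNonAssocSemiring R]
    (A : Matrix m k R) (B : Matrix k p R) {j₀ : k} {l : p} (hB : ∀ j, j ≠ j₀ → B j l = 0)
    (i : m) : (A * B) i l = A i j₀ * B j₀ l := by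
  rw [mul_apply]
  exact Fintype.sum_eq_single j₀ fun j hj => by rw [hB j hj, mul_zero]

theorem mul_apply_of_forall_ne_ne_eq_zero [NonUnitalNonAssocSemiring R]
    (A : Matrix m k R) (B : Matrix k p R) {j₀ j₁ : k} (hj : j₀ ≠ j₁) {l : p}
    (hB : ∀ j, j ≠ j₀ → j ≠ j₁ → B j l = 0) (i : m) :
    (A * B) i l = A i j₀ * B j₀ l + A i j₁ * B j₁ l := by
  rw [mul_apply]
  exact Fintype.sum_eq_add j₀ j₁ hj fun j hj' => by rw [hB j hj'.1 hj'.2, mul_zero]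

variable [DecidableEq m] [Semiring R] [Nontrivial R] {A : Matrix m k R} {B : Matrix k m R}

theorem ne_zero_of_mul_eq_one_of_forall_ne_eq_zero (hAB : A * B = 1) {j₀ : k} {i : m}
    (hB : ∀ j, j ≠ j₀ → B j i = 0) : A i j₀ ≠ 0 := by
  have hii : (A * B) i i = 1 := by rw [hAB, one_apply_eq]
  rw [mul_apply_of_forall_ne_eq_zero A B hB] at hii
  exact left_ne_zero_of_mul_eq_one hii

theorem eq_zero_or_eq_zero_of_mul_eq_one [NoZeroDivisors R] (hAB : A * B = 1)
    {i₀ i₁ i₂ : m} (h₀₁ : i₀ ≠ i₁) (h₀₂ : i₀ ≠ i₂) (h₁₂ : i₁ ≠ i₂)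
    {j₀ j₁ j₂ : k} (h₀₂' : j₀ ≠ j₂) (h₁₂' : j₁ ≠ j₂)
    (hB₁ : ∀ j, j ≠ j₀ → j ≠ j₂ → B j i₁ = 0) (hB₂ : ∀ j, j ≠ j₁ → j ≠ j₂ → B j i₂ = 0)
    (hA₀ : A i₀ j₂ = 0) (hA₁ : A i₁ j₁ = 0) : A i₀ j₀ = 0 ∨ A i₀ j₁ = 0 := by
  have entry (i l : m) : (A * B) i l = (1 : Matrix m m R) i l := by rw [hAB]
  have col₁ := mul_apply_of_forall_ne_ne_eq_zero A B h₀₂' hB₁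
  have col₂ := mul_apply_of_forall_ne_ne_eq_zero A B h₁₂' hB₂
  have e₀₁ := entry i₀ i₁
  have e₀₂ := entry i₀ i₂
  have e₁₁ := entry i₁ i₁
  have e₁₂ := entry i₁ i₂
  have e₂₂ := entry i₂ i₂
  rw [col₁, hA₀, zero_mul, add_zero, one_apply_ne h₀₁] at e₀₁
  rw [col₂, hA₀, zero_mul, add_zero, one_apply_ne h₀₂] at e₀₂
  rw [col₁, one_apply_eq] at e₁₁
  rw [col₂, hA₁, zero_mul, zero_add, one_apply_ne h₁₂] at e₁₂
  rw [col₂, one_apply_eq] at e₂₂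
  by_contra! ⟨ha, hb⟩
  have hx : B j₀ i₁ = 0 := (mul_eq_zero.1 e₀₁).resolve_left ha
  have hy : B j₁ i₂ = 0 := (mul_eq_zero.1 e₀₂).resolve_left hb
  rw [hx, mul_zero, zero_add] at e₁₁
  have hw : B j₂ i₂ = 0 := (mul_eq_zero.1 e₁₂).resolve_left (left_ne_zero_of_mul_eq_one e₁₁)
  rw [hy, hw, mul_zero, mul_zero, add_zero] at e₂₂
  exact zero_ne_one e₂₂

end Matrix

def SupportA (n i j : ℕ) : Prop :=
  (j = 3 * n ∧ i = 0) ∨ (j < 3 * n ∧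
    ((j % 3 = 0 ∧ (i = 0 ∨ i = 2 * (j / 3) + 1)) ∨
     (j % 3 = 1 ∧ (i = 0 ∨ i = 2 * (j / 3) + 2)) ∨
     (j % 3 = 2 ∧ (i = 2 * (j / 3) + 1 ∨ i = 2 * (j / 3) + 2))))

def SupportB (n j l : ℕ) : Prop :=
  (j = 3 * n ∧ l = 0) ∨ (j < 3 * n ∧
    ((j % 3 = 0 ∧ l = 2 * (j / 3) + 1) ∨
     (j % 3 = 1 ∧ l = 2 * (j / 3) + 2) ∨
     (j % 3 = 2 ∧ (l = 2 * (j / 3) + 1 ∨ l = 2 * (j / 3) + 2))))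

section SupportPattern

variable {R : Type*} [Semiring R] [Nontrivial R] {n : ℕ}
  {A : Matrix (Fin (2 * n + 1)) (Fin (3 * n + 1)) R}
  {B : Matrix (Fin (3 * n + 1)) (Fin (2 * n + 1)) R}
  (hA : ∀ (i : Fin (2 * n + 1)) (j : Fin (3 * n + 1)), ¬SupportA n i j → A i j = 0)
  (hB : ∀ (j : Fin (3 * n + 1)) (l : Fin (2 * n + 1)), ¬SupportB n j l → B j l = 0)
  (hAB : A * B = 1)

include hB hAB in
theorem ne_zero_of_support : A 0 (Fin.last (3 * n)) ≠ 0 :=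
  ne_zero_of_mul_eq_one_of_forall_ne_eq_zero hAB fun j hj => hB _ _ <| by
    simp only [ne_eq, Fin.ext_iff, Fin.val_last] at hj
    have := j.isLt
    simp only [SupportB, Fin.val_zero]
    omega

include hA hB hAB in
theorem eq_zero_or_eq_zero_of_support [NoZeroDivisors R] {k : ℕ} (hk : k < n)
    {j₀ j₁ : Fin (3 * n + 1)} (hj₀ : (j₀ : ℕ) = 3 * k) (hj₁ : (j₁ : ℕ) = 3 * k + 1) :
    A 0 j₀ = 0 ∨ A 0 j₁ = 0 := by
  refine eq_zero_or_eq_zero_of_mul_eq_one hAB (i₁ := ⟨2 * k + 1, by omega⟩)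
    (i₂ := ⟨2 * k + 2, by omega⟩) (j₂ := ⟨3 * k + 2, by omega⟩) ?_ ?_ ?_ ?_ ?_
    (fun j h₀ h₂ => hB _ _ ?_) (fun j h₀ h₂ => hB _ _ ?_) (hA _ _ ?_) (hA _ _ ?_) <;>
    simp only [ne_eq, Fin.ext_iff, Fin.val_zero, SupportA, SupportB] at * <;> omega

end SupportPattern

/-- With `v k = 1` row `0` reserves column `3k` and rows `2k+1, 2k+2` get `3k+2, 3k+1`;
with `v k = 2` row `0` reserves `3k+1` and rows `2k+1, 2k+2` get `3k, 3k+2`. -/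
def pivotCol (v : ℕ → ℕ) (n l : ℕ) : ℕ :=
  if l = 0 then 3 * n
  else 3 * ((l - 1) / 2) + if l % 2 = 1 then 4 - 2 * v ((l - 1) / 2) else v ((l - 1) / 2)

section pivotCol

variable {v : ℕ → ℕ} {n : ℕ} (hv : ∀ k, k < n → v k = 1 ∨ v k = 2)
include hv

theorem pivotCol_lt {l : ℕ} (hl : l < 2 * n + 1) : pivotCol v n l < 3 * n + 1 := by
  have := hv ((l - 1) / 2)
  unfold pivotCol
  split_ifs <;> omega

theorem pivotCol_injOn {i l : ℕ} (hi : i < 2 * n + 1) (hl : l < 2 * n + 1)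
    (h : pivotCol v n i = pivotCol v n l) : i = l := by
  have := hv ((i - 1) / 2)
  have := hv ((l - 1) / 2)
  have same_block : (i - 1) / 2 = (l - 1) / 2 → v ((i - 1) / 2) = v ((l - 1) / 2) :=
    fun h => by rw [h]
  unfold pivotCol at h
  split_ifs at h <;> omega

theorem pivotCol_ne_reserved {l k : ℕ} (hl : l < 2 * n + 1) (hk : k < n) :
    pivotCol v n l ≠ 3 * k + v k - 1 := by
  have := hv k hk
  have := hv ((l - 1) / 2)
  have same_block : (l - 1) / 2 = k → v ((l - 1) / 2) = v k := fun h => by rw [h]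
  unfold pivotCol
  split_ifs <;> omega

theorem supportA_pivotCol {l : ℕ} (hl : l < 2 * n + 1) : SupportA n l (pivotCol v n l) := by
  have := hv ((l - 1) / 2)
  unfold pivotCol SupportA
  split_ifs <;> omega

theorem supportB_pivotCol {l : ℕ} (hl : l < 2 * n + 1) : SupportB n (pivotCol v n l) l := by
  have := hv ((l - 1) / 2)
  unfold pivotCol SupportB
  split_ifs <;> omega

theorem supportA_reserved {k : ℕ} (hk : k < n) : SupportA n 0 (3 * k + v k - 1) := by
  have := hv k hk
  unfold SupportA
  omega

end pivotCol

theorem exists_realization_of_support (R : Type*) [Semiring R] [Nontrivial R] {n : ℕ}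
    {v : ℕ → ℕ} (hv : ∀ k, k < n → v k = 1 ∨ v k = 2) :
    ∃ (A : Matrix (Fin (2 * n + 1)) (Fin (3 * n + 1)) R)
      (B : Matrix (Fin (3 * n + 1)) (Fin (2 * n + 1)) R),
      (∀ (i : Fin (2 * n + 1)) (j : Fin (3 * n + 1)), ¬SupportA n i j → A i j = 0) ∧
      (∀ (j : Fin (3 * n + 1)) (l : Fin (2 * n + 1)), ¬SupportB n j l → B j l = 0) ∧
      A * B = 1 ∧
      ∀ k < n, ∀ j : Fin (3 * n + 1), (j : ℕ) = 3 * k + v k - 1 → A 0 j ≠ 0 := by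
  classical
  let σ : Fin (2 * n + 1) → Fin (3 * n + 1) := fun l => ⟨pivotCol v n l, pivotCol_lt hv l.isLt⟩
  have hσ : Injective σ := fun i l h =>
    Fin.ext (pivotCol_injOn hv i.isLt l.isLt (Fin.ext_iff.1 h))
  let Reserved (j : Fin (3 * n + 1)) : Prop := ∃ k < n, (j : ℕ) = 3 * k + v k - 1
  have not_reserved (l) : ¬Reserved (σ l) := fun ⟨k, hk, h⟩ => pivotCol_ne_reserved hv l.isLt hk h
  refine ⟨of fun i j => if j = σ i ∨ (i = 0 ∧ Reserved j) then 1 else 0,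
    (1 : Matrix _ _ R).submatrix id σ, ?_, ?_, ?_, ?_⟩
  · intro i j h
    rw [of_apply, if_neg]
    rintro (rfl | ⟨rfl, k, hk, hj⟩)
    · exact h (supportA_pivotCol hv i.isLt)
    · exact h (hj ▸ supportA_reserved hv hk)
  · intro j l h
    rw [submatrix_apply, one_apply_ne]
    rintro rfl
    exact h (supportB_pivotCol hv l.isLt)
  · ext i l
    rw [mul_apply_of_forall_ne_eq_zero _ _ (j₀ := σ l) fun j hj => by simp [hj]]
    simp [not_reserved, hσ.eq_iff, one_apply, eq_comm]
  · intro k hk j hj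
    rw [of_apply, if_pos (Or.inr ⟨rfl, k, hk, hj⟩)]
    exact one_ne_zero

/-- **Variable block lemma.** For every `n ≥ 1` there is a constrained-invertibility
instance `(P, Q)` over `F^{(2n+1)×(3n+1)} × F^{(3n+1)×(2n+1)}` such that in every solution
`A·B = I_{2n+1}` respecting the zero patterns `P`, `Q`: the entry `A_{1,3n+1}` is nonzero
and for each `k < n` at least one of `A_{1,3k+1}`, `A_{1,3k+2}` is zero; and for every
choice `v : {0,…,n-1} → {1,2}` there is a solution with `A_{1,3k+v(k)} ≠ 0` for all `k`.
(Indices in the Lean statement are 0-based.) -/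
theorem stmt_2 (F : Type) [Field F] (n : ℕ) :
    ∃ (P : Set (Fin (2*n+1) × Fin (3*n+1))) (Q : Set (Fin (3*n+1) × Fin (2*n+1))),
      (∀ (A : Matrix (Fin (2*n+1)) (Fin (3*n+1)) F)
         (B : Matrix (Fin (3*n+1)) (Fin (2*n+1)) F),
         (∀ ij ∈ P, A ij.1 ij.2 = 0) → (∀ ij ∈ Q, B ij.1 ij.2 = 0) → A * B = 1 →
         A ⟨0, by omega⟩ ⟨3*n, by omega⟩ ≠ 0 ∧
         ∀ k (hk : k < n),
           A ⟨0, by omega⟩ ⟨3*k, by omega⟩ = 0 ∨ A ⟨0, by omega⟩ ⟨3*k+1, by omega⟩ = 0) ∧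
      (∀ (v : ℕ → ℕ) (hv : ∀ k, k < n → v k = 1 ∨ v k = 2),
        ∃ (A : Matrix (Fin (2*n+1)) (Fin (3*n+1)) F)
          (B : Matrix (Fin (3*n+1)) (Fin (2*n+1)) F),
          (∀ ij ∈ P, A ij.1 ij.2 = 0) ∧ (∀ ij ∈ Q, B ij.1 ij.2 = 0) ∧ A * B = 1 ∧
          ∀ k (hk : k < n),
            A ⟨0, by omega⟩ ⟨3*k + v k - 1, by have := hv k hk; omega⟩ ≠ 0) := by
  refine ⟨{ij | ¬SupportA n ij.1 ij.2}, {ij | ¬SupportB n ij.1 ij.2}, ?_, ?_⟩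
  · intro A B hA hB hAB
    have hA' i j := hA (i, j)
    have hB' j l := hB (j, l)
    exact ⟨ne_zero_of_support hB' hAB,
      fun k hk => eq_zero_or_eq_zero_of_support hA' hB' hAB hk rfl rfl⟩
  · intro v hv
    obtain ⟨A, B, hA, hB, hAB, hA₀⟩ := exists_realization_of_support F hv
    exact ⟨A, B, fun ij => hA ij.1 ij.2, fun ij => hB ij.1 ij.2, hAB, fun k hk => hA₀ k hk _ rfl⟩
end

section
/- Let F be a finite field, let n, m ≥ 1, set s = n + m, and let P ⊆ [n]×[s] and Q ⊆ [s]×[n]. Then there exist A ∈ F^{n×s} and B ∈ F^{s×n} with A_{i,j} = 0 for all (i,j) ∈ P, B_{i,j} = 0 for all (i,j) ∈ Q, and A·B = I_n, if and only if there exist square matrices Ã, B̃ ∈ F^{s×s} with Ã_{i,j} = 0 for all (i,j) ∈ P, B̃_{i,j} = 0 for all (i,j) ∈ Q, and Ã·B̃ = I_s (here the constraints from P only concern the top n rows of Ã, and those from Q only the left n columns of B̃). -/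
/-!
If `A * B = 1`, then `1 - B * A` is a projection of `F^s` onto `ker A`, a space of dimension `m`.
Identifying `ker A` with `F^m`, its inclusion `C` and the projection `D` satisfy
`A * C = 0`, `D * B = 0` and `D * C = 1`, so stacking `A` over `D` and `B` beside `C` gives mutually
inverse square matrices with the same zero pattern. Conversely, the top-left block of
`Ã * B̃ = 1` is `A * B = 1` for the top rows `A` of `Ã` and the left columns `B` of `B̃`.
-/

open Matrix

theorem LinearMap.exists_comp_eq_zero_and_comp_eq_id {R V W U : Type*} [Ring R]
    [AddCommGroup V] [Module R V] [AddCommGroup W] [Module R W] [AddCommGroup U] [Module R U]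
    (f : V →ₗ[R] W) (g : W →ₗ[R] V) (hfg : f ∘ₗ g = id) (e : U ≃ₗ[R] ker f) :
    ∃ (c : U →ₗ[R] V) (d : V →ₗ[R] U), f ∘ₗ c = 0 ∧ d ∘ₗ g = 0 ∧ d ∘ₗ c = id := by
  have hfgx (w : W) : f (g w) = w := LinearMap.congr_fun hfg w
  let p : V →ₗ[R] ker f := (id - g ∘ₗ f).codRestrict _ fun v => by simp [hfgx]
  refine ⟨(ker f).subtype ∘ₗ e, e.symm ∘ₗ p, ?_, ?_, ?_⟩ <;> ext x
  · exact (e x).2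
  · have : p (g x) = 0 := Subtype.ext (by simp [p, hfgx])
    simp [this]
  · have : p (e x) = e x := Subtype.ext (by simp [p])
    simp [this]

open LinearMap in
theorem Matrix.exists_fromRows_mul_fromCols_eq_one {K ι κ σ : Type*} [Field K]
    [Fintype ι] [Fintype κ] [Fintype σ] [DecidableEq ι] [DecidableEq κ] [DecidableEq σ]
    (A : Matrix ι σ K) (B : Matrix σ ι K) (hAB : A * B = 1)
    (hcard : Fintype.card σ = Fintype.card ι + Fintype.card κ) :
    ∃ (C : Matrix σ κ K) (D : Matrix κ σ K), fromRows A D * fromCols B C = 1 := by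
  have hAB' : toLin' A ∘ₗ toLin' B = LinearMap.id := by rw [← toLin'_mul, hAB, toLin'_one]
  have hker : Module.finrank K (ker (toLin' A)) = Fintype.card κ := by
    have := finrank_range_add_finrank_ker (toLin' A)
    rw [range_eq_top.mpr (surjective_of_comp_eq_id _ _ hAB'), finrank_top] at this
    simp only [Module.finrank_fintype_fun_eq_card] at this
    omega
  obtain ⟨c, d, hc, hd, hdc⟩ := (toLin' A).exists_comp_eq_zero_and_comp_eq_id _ hAB'
    (LinearEquiv.ofFinrankEq (κ → K) _ (by simp [hker]))
  refine ⟨toMatrix' c, toMatrix' d, ?_⟩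
  have hAC : A * toMatrix' c = 0 := by
    rw [← toMatrix'_toLin' A, ← toMatrix'_comp, hc, map_zero]
  have hDB : toMatrix' d * B = 0 := by
    rw [← toMatrix'_toLin' B, ← toMatrix'_comp, hd, map_zero]
  have hDC : toMatrix' d * toMatrix' c = 1 := by
    rw [← toMatrix'_comp, hdc, toMatrix'_id]
  rw [fromRows_mul_fromCols, hAB, hAC, hDB, hDC, fromBlocks_one]

/-- **Padding a GCI instance to a CI instance.** With `s = n + m`, there exist
`A ∈ F^{n×s}`, `B ∈ F^{s×n}` avoiding `P`, `Q` with `A·B = I_n` iff there exist square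
matrices `Ã, B̃ ∈ F^{s×s}` avoiding (the embedded copies of) `P`, `Q` with `Ã·B̃ = I_s`. -/
theorem stmt_5 (F : Type) [Field F] (n m : ℕ)
    (P : Set (Fin n × Fin (n + m))) (Q : Set (Fin (n + m) × Fin n)) :
    (∃ (A : Matrix (Fin n) (Fin (n + m)) F) (B : Matrix (Fin (n + m)) (Fin n) F),
        (∀ ij ∈ P, A ij.1 ij.2 = 0) ∧ (∀ ij ∈ Q, B ij.1 ij.2 = 0) ∧ A * B = 1) ↔
    (∃ At Bt : Matrix (Fin (n + m)) (Fin (n + m)) F,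
        (∀ ij ∈ P, At (Fin.castLE (by omega) ij.1) ij.2 = 0) ∧
        (∀ ij ∈ Q, Bt ij.1 (Fin.castLE (by omega) ij.2) = 0) ∧ At * Bt = 1) := by
  constructor
  · rintro ⟨A, B, hP, hQ, hAB⟩
    obtain ⟨C, D, hCD⟩ :=
      exists_fromRows_mul_fromCols_eq_one (κ := Fin m) A B hAB (by simp)
    refine ⟨(fromRows A D).submatrix finSumFinEquiv.symm id,
      (fromCols B C).submatrix id finSumFinEquiv.symm, fun ij hij => ?_, fun ij hij => ?_, ?_⟩
    · change fromRows A D (finSumFinEquiv.symm (Fin.castAdd m ij.1)) ij.2 = 0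
      simpa using hP ij hij
    · change fromCols B C ij.1 (finSumFinEquiv.symm (Fin.castAdd m ij.2)) = 0
      simpa using hQ ij hij
    · rw [← submatrix_mul _ _ _ _ _ Function.bijective_id, hCD, submatrix_one_equiv]
  · rintro ⟨At, Bt, hP, hQ, h1⟩
    refine ⟨At.submatrix (Fin.castAdd m) id, Bt.submatrix id (Fin.castAdd m), hP, hQ, ?_⟩
    rw [← submatrix_mul _ _ _ _ _ Function.bijective_id, h1,
      submatrix_one _ (Fin.castAdd_injective n m)]
end

section
/- Let S and T be staircases in ℝ², let M = k_S and N = k_T, and let ε ≥ 0. If ε < d_s(S,T), then the only morphism from M to N^ε is the zero morphism. If ε ≥ d_s(S,T), then for every λ ∈ F the family of maps sending 1 ∈ M_p to λ ∈ (N^ε)_p for each p ∈ S (and zero on points outside S) is a morphism from M to N^ε. -/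
structure PersMod (F : Type) [Field F] where
  space : ℝ × ℝ → Type
  [isACG : ∀ p, AddCommGroup (space p)]
  [isMod : ∀ p, Module F (space p)]
  map : ∀ {p q : ℝ × ℝ}, p ≤ q → (space p →ₗ[F] space q)
  map_id : ∀ p : ℝ × ℝ, map (le_refl p) = LinearMap.id
  map_comp : ∀ {p q r : ℝ × ℝ} (hpq : p ≤ q) (hqr : q ≤ r),
      map hqr ∘ₗ map hpq = map (le_trans hpq hqr)

attribute [instance] PersMod.isACG PersMod.isMod

variable {F : Type} [Field F]

/-- `f` is a morphism of persistence modules `M → N`. -/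
def IsHom (M N : PersMod F) (f : ∀ p, M.space p →ₗ[F] N.space p) : Prop :=
  ∀ ⦃p q : ℝ × ℝ⦄ (h : p ≤ q), N.map h ∘ₗ f p = f q ∘ₗ M.map h

/-- `f` is a morphism of persistence modules `M → N^ε` (the `ε`-shift of `N`). -/
def IsHomShift (M N : PersMod F) (ε : ℝ)
    (f : ∀ p : ℝ × ℝ, M.space p →ₗ[F] N.space (p + (ε, ε))) : Prop :=
  ∀ ⦃p q : ℝ × ℝ⦄ (h : p ≤ q),
    N.map (add_le_add h (le_refl ((ε : ℝ), (ε : ℝ)))) ∘ₗ f p = f q ∘ₗ M.map h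

/-- `(f, g)` is an `ε`-interleaving between `M` and `N`. -/
def IsInterleaving (M N : PersMod F) (ε : ℝ)
    (f : ∀ p : ℝ × ℝ, M.space p →ₗ[F] N.space (p + (ε, ε)))
    (g : ∀ p : ℝ × ℝ, N.space p →ₗ[F] M.space (p + (ε, ε))) : Prop :=
  IsHomShift M N ε f ∧ IsHomShift N M ε g ∧
  (∀ (p : ℝ × ℝ) (h : p ≤ p + (ε, ε) + (ε, ε)), g (p + (ε, ε)) ∘ₗ f p = M.map h) ∧
  (∀ (p : ℝ × ℝ) (h : p ≤ p + (ε, ε) + (ε, ε)), f (p + (ε, ε)) ∘ₗ g p = N.map h)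

def upset (a : ℝ × ℝ) : Set (ℝ × ℝ) := {x | a ≤ x}

def IsStaircase (S : Set (ℝ × ℝ)) : Prop :=
  ∃ A : Finset (ℝ × ℝ), A.Nonempty ∧ S = ⋃ a ∈ A, upset a

def UpClosed (U : Set (ℝ × ℝ)) : Prop :=
  ∀ ⦃p q : ℝ × ℝ⦄, p ≤ q → p ∈ U → q ∈ U

theorem IsStaircase.upClosed {S : Set (ℝ × ℝ)} (hS : IsStaircase S) : UpClosed S := by
  obtain ⟨A, -, rfl⟩ := hS
  intro p q hpq hp
  simp only [Set.mem_iUnion] at hp ⊢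
  obtain ⟨a, ha, hpa⟩ := hp
  exact ⟨a, ha, le_trans hpa hpq⟩

open Classical in
/-- The fiber of the staircase module over `U` at `p` : `F` if `p ∈ U`, else `0`,
realized as a submodule of `F`. -/
noncomputable def lineAt (F : Type) [Field F] (U : Set (ℝ × ℝ)) (p : ℝ × ℝ) :
    Submodule F F :=
  if p ∈ U then ⊤ else ⊥

/-- The interval (staircase) module `k_U` of an upward closed set `U`. -/
noncomputable def stairMod (F : Type) [Field F] (U : Set (ℝ × ℝ)) (hU : UpClosed U) :
    PersMod F where
  space p := ↥(lineAt F U p)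
  map {p q} h := Submodule.inclusion (by
    by_cases hp : p ∈ U
    · simp [lineAt, hp, hU h hp]
    · simp [lineAt, hp])
  map_id p := rfl
  map_comp _ _ := rfl

/-- The element `1 ∈ F = (k_U)_p` for `p ∈ U`. -/
noncomputable def unitVec (F : Type) [Field F] (U : Set (ℝ × ℝ)) (p : ℝ × ℝ)
    (hp : p ∈ U) : ↥(lineAt F U p) :=
  ⟨1, by simp [lineAt, hp]⟩

/-- The value in `F` of an element of the fiber of `k_U` at `p`. -/
noncomputable def valAt (F : Type) [Field F] (U : Set (ℝ × ℝ)) (p : ℝ × ℝ) :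
    ↥(lineAt F U p) →ₗ[F] F :=
  (lineAt F U p).subtype

/-- Finite direct sums of persistence modules, defined pointwise. -/
noncomputable def dirSum {n : ℕ} (Ms : Fin n → PersMod F) : PersMod F where
  space p := ∀ i, (Ms i).space p
  map h := LinearMap.pi fun i => (Ms i).map h ∘ₗ LinearMap.proj i
  map_id p := by
    refine LinearMap.ext fun x => funext fun i => ?_
    simp [(Ms i).map_id]
  map_comp hpq hqr := by
    refine LinearMap.ext fun x => funext fun i => ?_
    simpa using LinearMap.congr_fun ((Ms i).map_comp hpq hqr) (x i)

/-- Direct sum of staircase modules. -/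
noncomputable def stairSum (F : Type) [Field F] {n : ℕ} (S : Fin n → Set (ℝ × ℝ))
    (hS : ∀ i, UpClosed (S i)) : PersMod F :=
  dirSum fun i => stairMod F (S i) (hS i)

/-- The `ε`-shift `S^ε = {x - (ε,ε) : x ∈ S}` of a set. -/
def shiftSet (S : Set (ℝ × ℝ)) (ε : ℝ) : Set (ℝ × ℝ) := {x | x + (ε, ε) ∈ S}

/-- The directed shift distance `d_s(S,T) = min {ε ≥ 0 : S ⊆ T^ε}`. -/
noncomputable def dirDist (S T : Set (ℝ × ℝ)) : ℝ :=
  sInf {ε : ℝ | 0 ≤ ε ∧ S ⊆ shiftSet T ε}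

/-- `M`, `N` are `ε`-interleaved. -/
def Interleaved (M N : PersMod F) (ε : ℝ) : Prop :=
  ∃ f g, IsInterleaving M N ε f g

/-- The interleaving distance. -/
noncomputable def interDist (M N : PersMod F) : ℝ :=
  sInf {ε : ℝ | 0 ≤ ε ∧ Interleaved M N ε}

/-- `S` has a finite generating set all of whose members are `≤ u`. -/
theorem upClosed_of_gens {S : Set (ℝ × ℝ)} {u : ℝ × ℝ}
    (h : ∃ A : Finset (ℝ × ℝ), A.Nonempty ∧ S = (⋃ a ∈ A, upset a) ∧ ∀ a ∈ A, a ≤ u) :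
    UpClosed S := by
  obtain ⟨A, hne, hSeq, -⟩ := h
  exact IsStaircase.upClosed ⟨A, hne, hSeq⟩

theorem mem_of_gens {S : Set (ℝ × ℝ)} {u v : ℝ × ℝ}
    (h : ∃ A : Finset (ℝ × ℝ), A.Nonempty ∧ S = (⋃ a ∈ A, upset a) ∧ ∀ a ∈ A, a ≤ u)
    (huv : u ≤ v) : v ∈ S := by
  obtain ⟨A, ⟨a, ha⟩, rfl, hle⟩ := h
  exact Set.mem_biUnion ha (le_trans (hle a ha) huv)

/-- `f : M → N^ε` has `δ`-trivial kernel: the induced map `ker f_p → ker f_{p+(δ,δ)}`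
is zero for all `p`. -/
def TrivialKerS (M N : PersMod F) (ε δ : ℝ)
    (f : ∀ p, M.space p →ₗ[F] N.space (p + (ε, ε))) : Prop :=
  ∀ (p : ℝ × ℝ) (x : M.space p), f p x = 0 → ∀ h : p ≤ p + (δ, δ), M.map h x = 0

/-- `f : M → N^ε` has `δ`-trivial cokernel: the induced map
`coker f_p → coker f_{p+(δ,δ)}` is zero for all `p`. -/
def TrivialCokerS (M N : PersMod F) (ε δ : ℝ)
    (f : ∀ p, M.space p →ₗ[F] N.space (p + (ε, ε))) : Prop :=
  ∀ (p : ℝ × ℝ) (y : N.space (p + (ε, ε))) (h : p + (ε, ε) ≤ p + (δ, δ) + (ε, ε)),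
    ∃ x : M.space (p + (δ, δ)), f (p + (δ, δ)) x = N.map h y

/-- `f : M → N` has `δ`-trivial kernel. -/
def TrivialKer (M N : PersMod F) (δ : ℝ) (f : ∀ p, M.space p →ₗ[F] N.space p) : Prop :=
  ∀ (p : ℝ × ℝ) (x : M.space p), f p x = 0 → ∀ h : p ≤ p + (δ, δ), M.map h x = 0

/-- `f : M → N` has `δ`-trivial cokernel. -/
def TrivialCoker (M N : PersMod F) (δ : ℝ) (f : ∀ p, M.space p →ₗ[F] N.space p) : Prop :=
  ∀ (p : ℝ × ℝ) (y : N.space p) (h : p ≤ p + (δ, δ)),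
    ∃ x : M.space (p + (δ, δ)), f (p + (δ, δ)) x = N.map h y

/-- The interior of an upward closed subset of `ℝ²` is upward closed. -/
theorem upClosed_interior {U : Set (ℝ × ℝ)} (hU : UpClosed U) :
    UpClosed (interior U) := by
  intro p q hpq hp
  have hsub : (fun x : ℝ × ℝ => x - (q - p)) ⁻¹' interior U ⊆ U := fun x hx =>
    hU (sub_le_self x (sub_nonneg.mpr hpq)) (interior_subset hx)
  have hopen : IsOpen ((fun x : ℝ × ℝ => x - (q - p)) ⁻¹' interior U) :=
    isOpen_interior.preimage (continuous_id.sub continuous_const)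
  have hq : q ∈ (fun x : ℝ × ℝ => x - (q - p)) ⁻¹' interior U := by
    show q - (q - p) ∈ interior U
    rwa [sub_sub_cancel]
  exact interior_maximal hsub hopen hq

/-- The dual persistence module: `(M*)_p = (M_{-p})^∨`. -/
noncomputable def dualMod (M : PersMod F) : PersMod F where
  space p := Module.Dual F (M.space (-p))
  map {p q} h := (M.map (neg_le_neg h)).dualMap
  map_id p := by
    have h : M.map (neg_le_neg (le_refl p)) = LinearMap.id := M.map_id (-p)
    ext φ x
    simp [h]
  map_comp hpq hqr := by
    ext φ x
    have h := LinearMap.congr_fun (M.map_comp (neg_le_neg hqr) (neg_le_neg hpq)) x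
    simp only [LinearMap.comp_apply, LinearMap.dualMap_apply] at h ⊢
    rw [h]

/-!
If some `x₀ ∈ S` has `x₀ + (ε, ε) ∉ T`, then for any `p` naturality along `p ≤ p ⊔ x₀` sends `f_p`
to a multiple of `f_{x₀} = 0`; since the structure maps of `k_T` are inclusions, `f_p = 0`.
Conversely, if `S ⊆ T^ε` the fibre inclusions `(k_S)_p ⊆ (k_T)_{p+(ε,ε)}` commute with the structure
maps, and so do their scalar multiples. The infimum defining `d_s(S, T)` is attained, because `T` is
closed and hence so is the set of admissible shifts.
-/

theorem IsStaircase.isClosed {S : Set (ℝ × ℝ)} (hS : IsStaircase S) : IsClosed S := by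
  obtain ⟨A, -, rfl⟩ := hS
  exact A.finite_toSet.isClosed_biUnion fun a _ => isClosed_Ici

theorem IsStaircase.nonempty {S : Set (ℝ × ℝ)} (hS : IsStaircase S) : S.Nonempty := by
  obtain ⟨A, ⟨a, ha⟩, rfl⟩ := hS
  exact ⟨a, Set.mem_biUnion ha (le_refl a)⟩

section ShiftDistance

variable {S T : Set (ℝ × ℝ)}

theorem shiftSet_mono (hT : UpClosed T) {ε ε' : ℝ} (h : ε ≤ ε') :
    shiftSet T ε ⊆ shiftSet T ε' := fun x hx =>
  hT (add_le_add_right (Prod.mk_le_mk.mpr ⟨h, h⟩) x) hx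

theorem isClosed_setOf_subset_shiftSet (hT : IsClosed T) :
    IsClosed {ε : ℝ | S ⊆ shiftSet T ε} := by
  have h : {ε : ℝ | S ⊆ shiftSet T ε} = ⋂ x ∈ S, (fun ε : ℝ => x + (ε, ε)) ⁻¹' T := by
    ext ε
    simp [shiftSet, Set.subset_def]
  rw [h]
  exact isClosed_biInter fun x _ => hT.preimage (by fun_prop)

theorem IsStaircase.exists_subset_shiftSet (hS : IsStaircase S) (hT : UpClosed T)
    (hne : T.Nonempty) : ∃ ε, 0 ≤ ε ∧ S ⊆ shiftSet T ε := by
  obtain ⟨A, -, rfl⟩ := hS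
  obtain ⟨b, hb⟩ := hne
  obtain ⟨c, hc⟩ := A.bddBelow
  set ε := max (max (b.1 - c.1) (b.2 - c.2)) 0
  refine ⟨ε, le_max_right _ _, fun x hx => hT ?_ hb⟩
  obtain ⟨a, ha, hax⟩ := Set.mem_iUnion₂.mp hx
  have hcx : c ≤ x := (hc ha).trans hax
  have h₁ : b.1 - c.1 ≤ ε := (le_max_left _ _).trans (le_max_left _ _)
  have h₂ : b.2 - c.2 ≤ ε := (le_max_right _ _).trans (le_max_left _ _)
  exact Prod.mk_le_mk.mpr ⟨by simp; linarith [hcx.1], by simp; linarith [hcx.2]⟩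

theorem subset_shiftSet_dirDist (hS : IsStaircase S) (hT : IsStaircase T) :
    S ⊆ shiftSet T (dirDist S T) := by
  have hmem : dirDist S T ∈ {ε : ℝ | 0 ≤ ε ∧ S ⊆ shiftSet T ε} :=
    (isClosed_Ici.inter (isClosed_setOf_subset_shiftSet hT.isClosed)).csInf_mem
      (hS.exists_subset_shiftSet hT.upClosed hT.nonempty) ⟨0, fun _ hε => hε.1⟩
  exact hmem.2

theorem subset_shiftSet_of_dirDist_le (hS : IsStaircase S) (hT : IsStaircase T) {ε : ℝ}
    (h : dirDist S T ≤ ε) : S ⊆ shiftSet T ε :=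
  (subset_shiftSet_dirDist hS hT).trans (shiftSet_mono hT.upClosed h)

theorem not_subset_shiftSet_of_lt_dirDist {ε : ℝ} (hε : 0 ≤ ε) (h : ε < dirDist S T) :
    ¬ S ⊆ shiftSet T ε := fun hsub =>
  (csInf_le ⟨0, fun _ hδ => hδ.1⟩ ⟨hε, hsub⟩ : dirDist S T ≤ ε).not_gt h

end ShiftDistance

section StaircaseModule

variable {U V : Set (ℝ × ℝ)}

theorem stairMod_eq_zero_of_notMem (hU : UpClosed U) {p : ℝ × ℝ} (hp : p ∉ U)
    (x : (stairMod F U hU).space p) : x = 0 := by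
  have hx := x.2
  simp only [lineAt, hp, if_false, Submodule.mem_bot] at hx
  exact Subtype.ext hx

theorem lineAt_le_lineAt {p q : ℝ × ℝ} (h : p ∈ U → q ∈ V) : lineAt F U p ≤ lineAt F V q := by
  by_cases hp : p ∈ U
  · simp [lineAt, hp, h hp]
  · simp [lineAt, hp]

theorem stairMod_map_injective (hU : UpClosed U) {p q : ℝ × ℝ} (h : p ≤ q) :
    Function.Injective ((stairMod F U hU).map h) :=
  Submodule.inclusion_injective (lineAt_le_lineAt fun hp => hU h hp)

theorem stairMod_map_eq_smul (hU : UpClosed U) {p x₀ q : ℝ × ℝ} (hx₀ : x₀ ∈ U) (hp : p ≤ q)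
    (hq : x₀ ≤ q) (x : (stairMod F U hU).space p) :
    (stairMod F U hU).map hp x = valAt F U p x • (stairMod F U hU).map hq (unitVec F U x₀ hx₀) :=
  Subtype.ext (mul_one _).symm

theorem IsHomShift.stairMod_eq_zero (hU : UpClosed U) (hV : UpClosed V) {ε : ℝ}
    {f : ∀ p, (stairMod F U hU).space p →ₗ[F] (stairMod F V hV).space (p + (ε, ε))}
    (hf : IsHomShift (stairMod F U hU) (stairMod F V hV) ε f) {x₀ : ℝ × ℝ} (hx₀U : x₀ ∈ U)
    (hx₀V : x₀ + (ε, ε) ∉ V) (p : ℝ × ℝ) : f p = 0 := by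
  have hp : p ≤ p ⊔ x₀ := le_sup_left
  have hx₀ : x₀ ≤ p ⊔ x₀ := le_sup_right
  have hf₀ : f x₀ (unitVec F U x₀ hx₀U) = 0 := stairMod_eq_zero_of_notMem hV hx₀V _
  refine LinearMap.ext fun x =>
    stairMod_map_injective hV (add_le_add hp le_rfl) ?_
  calc _ = f (p ⊔ x₀) ((stairMod F U hU).map hp x) := LinearMap.congr_fun (hf hp) x
    _ = valAt F U p x • f (p ⊔ x₀) ((stairMod F U hU).map hx₀ (unitVec F U x₀ hx₀U)) := by
      rw [stairMod_map_eq_smul hU hx₀U hp hx₀, map_smul]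
    _ = valAt F U p x • (stairMod F V hV).map (add_le_add hx₀ le_rfl)
          (f x₀ (unitVec F U x₀ hx₀U)) :=
      congrArg (valAt F U p x • ·) (LinearMap.congr_fun (hf hx₀) _).symm
    _ = 0 := by rw [hf₀, map_zero, smul_zero]
    _ = _ := (map_zero _).symm

noncomputable def stairShiftIncl (hU : UpClosed U) (hV : UpClosed V) {ε : ℝ}
    (h : U ⊆ shiftSet V ε) (p : ℝ × ℝ) :
    (stairMod F U hU).space p →ₗ[F] (stairMod F V hV).space (p + (ε, ε)) :=
  Submodule.inclusion (lineAt_le_lineAt fun hp => h hp)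

theorem isHomShift_smul_stairShiftIncl (hU : UpClosed U) (hV : UpClosed V) {ε : ℝ}
    (h : U ⊆ shiftSet V ε) (c : F) :
    IsHomShift (stairMod F U hU) (stairMod F V hV) ε (fun p => c • stairShiftIncl hU hV h p) :=
  fun _ _ _ => rfl

end StaircaseModule

theorem stmt_7_general (F : Type) [Field F] (S T : Set (ℝ × ℝ))
    (hS : IsStaircase S) (hT : IsStaircase T) (ε : ℝ) (hε : 0 ≤ ε) :
    (ε < dirDist S T →
      ∀ f, IsHomShift (stairMod F S hS.upClosed) (stairMod F T hT.upClosed) ε f →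
        ∀ p : ℝ × ℝ, f p = 0) ∧
    (dirDist S T ≤ ε → ∀ lam : F,
      ∃ f, IsHomShift (stairMod F S hS.upClosed) (stairMod F T hT.upClosed) ε f ∧
        (∀ p (hp : p ∈ S), valAt F T (p + (ε, ε)) (f p (unitVec F S p hp)) = lam) ∧
        (∀ p : ℝ × ℝ, p ∉ S → f p = 0)) := by
  constructor
  · intro hlt f hf
    obtain ⟨x₀, hx₀S, hx₀T⟩ := Set.not_subset.mp (not_subset_shiftSet_of_lt_dirDist hε hlt)
    exact hf.stairMod_eq_zero hS.upClosed hT.upClosed hx₀S hx₀T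
  · intro hle lam
    have hST := subset_shiftSet_of_dirDist_le hS hT hle
    refine ⟨_, isHomShift_smul_stairShiftIncl hS.upClosed hT.upClosed hST lam, ?_, ?_⟩
    · intro p hp
      exact mul_one lam
    · intro p hp
      refine LinearMap.ext fun x => ?_
      rw [stairMod_eq_zero_of_notMem hS.upClosed hp x, map_zero, map_zero]

/-- **Morphisms `k_S → (k_T)^ε` and the directed shift distance.** If `ε < d_s(S,T)`,
the only morphism `k_S → (k_T)^ε` is zero. If `ε ≥ d_s(S,T)`, then for every `λ ∈ F`
there is a morphism of the form `1 ↦ λ` (zero outside `S`). -/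
theorem stmt_7 (F : Type) [Field F] [Fintype F] (S T : Set (ℝ × ℝ))
    (hS : IsStaircase S) (hT : IsStaircase T) (ε : ℝ) (hε : 0 ≤ ε) :
    (ε < dirDist S T →
      ∀ f, IsHomShift (stairMod F S hS.upClosed) (stairMod F T hT.upClosed) ε f →
        ∀ p : ℝ × ℝ, f p = 0) ∧
    (dirDist S T ≤ ε → ∀ lam : F,
      ∃ f, IsHomShift (stairMod F S hS.upClosed) (stairMod F T hT.upClosed) ε f ∧
        (∀ p (hp : p ∈ S), valAt F T (p + (ε, ε)) (f p (unitVec F S p hp)) = lam) ∧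
        (∀ p : ℝ × ℝ, p ∉ S → f p = 0)) :=
  stmt_7_general F S T hS hT ε hε
end

section
/- Let M = ⊕_{i=1}^{n} k_{S_i} and N = ⊕_{j=1}^{n} k_{T_j} be direct sums of n staircase modules each, let ε ≥ 0, and let φ : M → N^ε and ψ : N → M^ε be morphisms. Let u ∈ ℝ² be a point with a ≤ u for every generator a of every staircase S_i and T_j, so that M_u ≅ F^n and (N^ε)_u ≅ F^n via the standard bases given by the summands. Let A ∈ F^{n×n} be the matrix of φ_u and B ∈ F^{n×n} the matrix of ψ_u with respect to these bases. Then (φ, ψ) is an ε-interleaving between M and N if and only if A·B = I_n and B·A = I_n, i.e., the matrices A and B are inverse to each other. -/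
variable {F : Type} [Field F]

/-! Taking coordinates along the summands embeds every fibre of a sum of `n` staircase modules
into `Fⁿ`, onto `Fⁿ` at `u`, and the structure maps preserve coordinates. Naturality along
`p ≤ p ⊔ u ≥ u` then shows that a morphism `φ : M → N^ε` acts at every `p` as multiplication by
its matrix `A` at `u`. So `ψ ∘ φ` acts everywhere by `B * A` and the structure map by `1`: they
agree everywhere when `B * A = 1`, and conversely agreement at `u` forces `B * A = 1`. -/

section StaircaseCoordinates

open scoped Matrix

variable {n : ℕ} {S T : Fin n → Set (ℝ × ℝ)} {hS : ∀ i, UpClosed (S i)}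
  {hT : ∀ i, UpClosed (T i)}

variable (F hS) in
noncomputable def stairCoords (p : ℝ × ℝ) : (stairSum F S hS).space p →ₗ[F] (Fin n → F) :=
  LinearMap.pi fun j => valAt F (S j) p ∘ₗ LinearMap.proj j

theorem stairCoords_injective (p : ℝ × ℝ) : Function.Injective (stairCoords F hS p) :=
  fun _ _ h => funext fun j => Subtype.ext (congrFun h j)

theorem stairCoords_surjective {p : ℝ × ℝ} (hp : ∀ j, p ∈ S j) :
    Function.Surjective (stairCoords F hS p) :=
  fun v => ⟨fun j => ⟨v j, by simp [lineAt, hp j]⟩, rfl⟩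

theorem stairCoords_map {p q : ℝ × ℝ} (h : p ≤ q) (x : (stairSum F S hS).space p) :
    stairCoords F hS q ((stairSum F S hS).map h x) = stairCoords F hS p x := rfl

theorem stairCoords_single_unitVec {p : ℝ × ℝ} (hp : ∀ j, p ∈ S j) (j : Fin n) :
    stairCoords F hS p (Pi.single j (unitVec F (S j) p (hp j))) = Pi.single j (1 : F) := by
  funext k
  change valAt F (S k) p (Pi.single (M := fun i => ↥(lineAt F (S i) p)) j
    (unitVec F (S j) p (hp j)) k) = (Pi.single j 1 : Fin n → F) k
  rcases eq_or_ne k j with rfl | hkj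
  · simp [valAt, unitVec]
  · simp [hkj]

theorem apply_eq_mulVec_stairCoords {p : ℝ × ℝ} (hp : ∀ j, p ∈ S j)
    (f : (stairSum F S hS).space p →ₗ[F] (Fin n → F)) {A : Matrix (Fin n) (Fin n) F}
    (hA : ∀ i j, A i j = f (Pi.single j (unitVec F (S j) p (hp j))) i)
    (x : (stairSum F S hS).space p) : f x = A *ᵥ stairCoords F hS p x := by
  let e := LinearEquiv.ofBijective (stairCoords F hS p)
    ⟨stairCoords_injective p, stairCoords_surjective hp⟩
  have hf : f ∘ₗ e.symm.toLinearMap = Matrix.toLin' A := by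
    rw [← Matrix.toLin'_toMatrix' (f ∘ₗ e.symm.toLinearMap)]
    congr 1
    ext i j
    have he : e.symm (Pi.single j 1) = Pi.single j (unitVec F (S j) p (hp j)) :=
      e.symm_apply_eq.mpr (stairCoords_single_unitVec hp j).symm
    rw [LinearMap.toMatrix'_apply, hA, LinearMap.comp_apply, LinearEquiv.coe_coe, he]
  have hx := LinearMap.congr_fun hf (e x)
  rwa [LinearMap.comp_apply, LinearEquiv.coe_coe, e.symm_apply_apply, Matrix.toLin'_apply] at hx

def HasMatrix {ε : ℝ}
    (φ : ∀ p, (stairSum F S hS).space p →ₗ[F] (stairSum F T hT).space (p + (ε, ε)))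
    (A : Matrix (Fin n) (Fin n) F) : Prop :=
  ∀ p x, stairCoords F hT (p + (ε, ε)) (φ p x) = A *ᵥ stairCoords F hS p x

theorem HasMatrix.of_isHomShift {ε : ℝ}
    {φ : ∀ p, (stairSum F S hS).space p →ₗ[F] (stairSum F T hT).space (p + (ε, ε))}
    (hφ : IsHomShift (stairSum F S hS) (stairSum F T hT) ε φ) {u : ℝ × ℝ}
    (hu : ∀ j, u ∈ S j) {A : Matrix (Fin n) (Fin n) F}
    (hA : ∀ i j, A i j = valAt F (T i) (u + (ε, ε))
      ((φ u (Pi.single j (unitVec F (S j) u (hu j)))) i)) :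
    HasMatrix φ A := by
  have hφ_coords : ∀ {q r : ℝ × ℝ} (h : q ≤ r) z, stairCoords F hT (q + (ε, ε)) (φ q z) =
      stairCoords F hT (r + (ε, ε)) (φ r ((stairSum F S hS).map h z)) := by
    intro q r h z
    rw [← LinearMap.comp_apply (φ r), ← hφ h]
    rfl
  intro p x
  -- `x` and a vector `y` at `u` with the same coordinates meet at `p ⊔ u`
  obtain ⟨y, hy⟩ := stairCoords_surjective hu (stairCoords F hS p x)
  have hxy : (stairSum F S hS).map (le_sup_left : p ≤ p ⊔ u) x =
      (stairSum F S hS).map (le_sup_right : u ≤ p ⊔ u) y :=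
    stairCoords_injective _ (by rw [stairCoords_map, stairCoords_map, hy])
  rw [hφ_coords le_sup_left, hxy, ← hφ_coords le_sup_right, ← hy]
  exact apply_eq_mulVec_stairCoords hu (stairCoords F hT (u + (ε, ε)) ∘ₗ φ u) hA y

theorem HasMatrix.comp {ε : ℝ}
    {φ : ∀ p, (stairSum F S hS).space p →ₗ[F] (stairSum F T hT).space (p + (ε, ε))}
    {ψ : ∀ p, (stairSum F T hT).space p →ₗ[F] (stairSum F S hS).space (p + (ε, ε))}
    {A B : Matrix (Fin n) (Fin n) F} (hφ : HasMatrix φ A) (hψ : HasMatrix ψ B)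
    (p : ℝ × ℝ) (x : (stairSum F S hS).space p) :
    stairCoords F hS (p + (ε, ε) + (ε, ε)) (ψ (p + (ε, ε)) (φ p x)) =
      (B * A) *ᵥ stairCoords F hS p x := by
  rw [hψ, hφ, Matrix.mulVec_mulVec]

theorem HasMatrix.comp_eq_map_iff {ε : ℝ} (hε : 0 ≤ ε)
    {φ : ∀ p, (stairSum F S hS).space p →ₗ[F] (stairSum F T hT).space (p + (ε, ε))}
    {ψ : ∀ p, (stairSum F T hT).space p →ₗ[F] (stairSum F S hS).space (p + (ε, ε))}
    {A B : Matrix (Fin n) (Fin n) F} (hφ : HasMatrix φ A) (hψ : HasMatrix ψ B)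
    {u : ℝ × ℝ} (hu : ∀ j, u ∈ S j) :
    (∀ (p : ℝ × ℝ) (h : p ≤ p + (ε, ε) + (ε, ε)),
      ψ (p + (ε, ε)) ∘ₗ φ p = (stairSum F S hS).map h) ↔ B * A = 1 := by
  constructor
  · intro hcomp
    have hu₂ : u ≤ u + (ε, ε) + (ε, ε) := by
      rw [add_assoc]
      exact le_add_of_nonneg_right (by simp [Prod.le_def, hε])
    refine Matrix.toLin'.injective (LinearMap.ext fun v => ?_)
    obtain ⟨x, rfl⟩ := stairCoords_surjective (hS := hS) hu v
    rw [Matrix.toLin'_apply, Matrix.toLin'_one, LinearMap.id_apply, ← hφ.comp hψ,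
      ← LinearMap.comp_apply (ψ _), hcomp u hu₂, stairCoords_map]
  · intro hBA p h
    refine LinearMap.ext fun x => stairCoords_injective _ ?_
    rw [LinearMap.comp_apply, hφ.comp hψ, hBA, Matrix.one_mulVec, stairCoords_map]

end StaircaseCoordinates

theorem stmt_9_general (F : Type) [Field F] (n : ℕ)
    (S T : Fin n → Set (ℝ × ℝ)) (u : ℝ × ℝ) (ε : ℝ) (hε : 0 ≤ ε)
    (hgS : ∀ i, ∃ A : Finset (ℝ × ℝ),
      A.Nonempty ∧ S i = (⋃ a ∈ A, upset a) ∧ ∀ a ∈ A, a ≤ u)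
    (hgT : ∀ j, ∃ A : Finset (ℝ × ℝ),
      A.Nonempty ∧ T j = (⋃ a ∈ A, upset a) ∧ ∀ a ∈ A, a ≤ u)
    (φ : ∀ p, (stairSum F S fun i => upClosed_of_gens (hgS i)).space p →ₗ[F]
              (stairSum F T fun j => upClosed_of_gens (hgT j)).space (p + (ε, ε)))
    (ψ : ∀ p, (stairSum F T fun j => upClosed_of_gens (hgT j)).space p →ₗ[F]
              (stairSum F S fun i => upClosed_of_gens (hgS i)).space (p + (ε, ε)))
    (hφ : IsHomShift (stairSum F S fun i => upClosed_of_gens (hgS i))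
            (stairSum F T fun j => upClosed_of_gens (hgT j)) ε φ)
    (hψ : IsHomShift (stairSum F T fun j => upClosed_of_gens (hgT j))
            (stairSum F S fun i => upClosed_of_gens (hgS i)) ε ψ)
    (Amat Bmat : Matrix (Fin n) (Fin n) F)
    (hA : ∀ i j : Fin n, Amat i j = valAt F (T i) (u + (ε, ε))
        ((φ u (Pi.single j (unitVec F (S j) u (mem_of_gens (hgS j) le_rfl)))) i))
    (hB : ∀ j i : Fin n, Bmat j i = valAt F (S j) (u + (ε, ε))
        ((ψ u (Pi.single i (unitVec F (T i) u (mem_of_gens (hgT i) le_rfl)))) j)) :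
    IsInterleaving (stairSum F S fun i => upClosed_of_gens (hgS i))
        (stairSum F T fun j => upClosed_of_gens (hgT j)) ε φ ψ ↔
      (Amat * Bmat = 1 ∧ Bmat * Amat = 1) := by
  have huS : ∀ i, u ∈ S i := fun i => mem_of_gens (hgS i) le_rfl
  have huT : ∀ j, u ∈ T j := fun j => mem_of_gens (hgT j) le_rfl
  have hφA : HasMatrix φ Amat := HasMatrix.of_isHomShift hφ huS hA
  have hψB : HasMatrix ψ Bmat := HasMatrix.of_isHomShift hψ huT hB
  rw [IsInterleaving, hφA.comp_eq_map_iff hε hψB huS, hψB.comp_eq_map_iff hε hφA huT]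
  exact ⟨fun h => ⟨h.2.2.2, h.2.2.1⟩, fun h => ⟨hφ, hψ, h.2, h.1⟩⟩

/-- **Interleavings of sums of staircase modules correspond to inverse matrices.**
Let `M`, `N` be direct sums of `n` staircase modules, all of whose generators are `≤ u`,
let `φ : M → N^ε`, `ψ : N → M^ε` be morphisms, and let `Amat`, `Bmat` be the matrices of
`φ_u`, `ψ_u` with respect to the standard bases. Then `(φ, ψ)` is an `ε`-interleaving iff
`Amat` and `Bmat` are mutually inverse. -/
theorem stmt_9 (F : Type) [Field F] [Fintype F] (n : ℕ) (hn : 1 ≤ n)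
    (S T : Fin n → Set (ℝ × ℝ)) (u : ℝ × ℝ) (ε : ℝ) (hε : 0 ≤ ε)
    (hgS : ∀ i, ∃ A : Finset (ℝ × ℝ),
      A.Nonempty ∧ S i = (⋃ a ∈ A, upset a) ∧ ∀ a ∈ A, a ≤ u)
    (hgT : ∀ j, ∃ A : Finset (ℝ × ℝ),
      A.Nonempty ∧ T j = (⋃ a ∈ A, upset a) ∧ ∀ a ∈ A, a ≤ u)
    (φ : ∀ p, (stairSum F S fun i => upClosed_of_gens (hgS i)).space p →ₗ[F]
              (stairSum F T fun j => upClosed_of_gens (hgT j)).space (p + (ε, ε)))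
    (ψ : ∀ p, (stairSum F T fun j => upClosed_of_gens (hgT j)).space p →ₗ[F]
              (stairSum F S fun i => upClosed_of_gens (hgS i)).space (p + (ε, ε)))
    (hφ : IsHomShift (stairSum F S fun i => upClosed_of_gens (hgS i))
            (stairSum F T fun j => upClosed_of_gens (hgT j)) ε φ)
    (hψ : IsHomShift (stairSum F T fun j => upClosed_of_gens (hgT j))
            (stairSum F S fun i => upClosed_of_gens (hgS i)) ε ψ)
    (Amat Bmat : Matrix (Fin n) (Fin n) F)
    (hA : ∀ i j : Fin n, Amat i j = valAt F (T i) (u + (ε, ε))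
        ((φ u (Pi.single j (unitVec F (S j) u (mem_of_gens (hgS j) le_rfl)))) i))
    (hB : ∀ j i : Fin n, Bmat j i = valAt F (S j) (u + (ε, ε))
        ((ψ u (Pi.single i (unitVec F (T i) u (mem_of_gens (hgT i) le_rfl)))) j)) :
    IsInterleaving (stairSum F S fun i => upClosed_of_gens (hgS i))
        (stairSum F T fun j => upClosed_of_gens (hgT j)) ε φ ψ ↔
      (Amat * Bmat = 1 ∧ Bmat * Amat = 1) :=
  stmt_9_general F n S T u ε hε hgS hgT φ ψ hφ hψ Amat Bmat hA hB
end

section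
/- For every n ≥ 1 and all sets P, Q ⊆ [n]×[n], there exist staircases S_1,…,S_n and T_1,…,T_n in ℝ², each a union of at most 4n²+1 sets of the form ⟨a⟩, such that for all i, j ∈ [n]: d_s(S_i, T_j) = 3 if reading (i,j) ∈ P and d_s(S_i, T_j) = 1 otherwise; and d_s(T_j, S_i) = 3 if (j,i) ∈ Q and d_s(T_j, S_i) = 1 otherwise. -/
variable {F : Type} [Field F]

/-!
Every staircase is generated by one point `(t + h, h - t)` per gadget: the gadgets sit at
positions `t` spaced `4` apart along the antidiagonal, and only the height `h` depends on the
staircase. As all heights lie in `[-1, 3]`, a generator can only be covered by the generator of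
its own gadget, so `d_s` is the largest height increase over the gadgets.

Each pair `(k, l)` gets one gadget for `S → T` and one for `T → S`. In the `S → T` gadget, with
`r ∈ {1, 3}` the prescribed value, `S_k` has height `0`, `T_l` height `r`, the other `S_i`
height `r - 1` and the other `T_j` height `r - 2`: there `S_k` climbs by `r` to `T_l`, every
other pair `S_i → T_j` by at most `1`, and every `T_j → S_i` by at most `1`. The `T → S`
gadgets are the mirror image.
-/

def gadgetPt (t h : ℝ) : ℝ × ℝ := (t + h, h - t)

theorem gadgetPt_le_add_iff {s t h h' ε : ℝ} :
    gadgetPt s h' ≤ gadgetPt t h + (ε, ε) ↔ h' + |s - t| ≤ h + ε := by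
  rw [← le_sub_iff_add_le', abs_sub_le_iff]
  simp only [gadgetPt, Prod.mk_add_mk, Prod.mk_le_mk]
  constructor <;> rintro ⟨h₁, h₂⟩ <;> constructor <;> linarith

theorem dirDist_iUnion_upset_eq {ι : Type*} {f g : ι → ℝ × ℝ} {c : ℝ} (hc : 0 ≤ c)
    (hle : ∀ x, g x ≤ f x + (c, c)) (x₀ : ι) (hlb : ∀ x ε, g x ≤ f x₀ + (ε, ε) → c ≤ ε) :
    dirDist (⋃ x, upset (f x)) (⋃ x, upset (g x)) = c := by
  refine IsLeast.csInf_eq ⟨⟨hc, fun p hp => ?_⟩, fun ε ⟨_, hsub⟩ => ?_⟩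
  · obtain ⟨x, hx⟩ := Set.mem_iUnion.1 hp
    exact Set.mem_iUnion.2 ⟨x, (hle x).trans (add_le_add_left hx _)⟩
  · have hx₀ : f x₀ ∈ ⋃ x, upset (f x) := Set.mem_iUnion.2 ⟨x₀, le_refl (f x₀)⟩
    obtain ⟨x, hx⟩ := Set.mem_iUnion.1 (hsub hx₀)
    exact hlb x ε hx

section GadgetStair

variable {ι : Type*} [Fintype ι]

noncomputable def gadgetPos (x : ι) : ℝ := 4 * (Fintype.equivFin ι x : ℕ)

noncomputable def gadgetStair (h : ι → ℝ) : Set (ℝ × ℝ) :=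
  ⋃ x, upset (gadgetPt (gadgetPos x) (h x))

theorem four_le_abs_gadgetPos_sub {x y : ι} (hxy : x ≠ y) :
    4 ≤ |gadgetPos x - gadgetPos y| := by
  have hne : ((Fintype.equivFin ι x : ℕ) : ℤ) ≠ (Fintype.equivFin ι y : ℕ) := by
    simpa [Fin.val_inj] using hxy
  have h1 : (1 : ℝ) ≤ |((Fintype.equivFin ι x : ℕ) : ℝ) - (Fintype.equivFin ι y : ℕ)| := by
    exact_mod_cast Int.one_le_abs (sub_ne_zero.2 hne)
  rw [gadgetPos, gadgetPos, ← mul_sub, abs_mul, abs_of_pos (by norm_num : (0 : ℝ) < 4)]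
  linarith

theorem exists_finset_gadgetStair [Nonempty ι] (h : ι → ℝ) :
    ∃ A : Finset (ℝ × ℝ), A.Nonempty ∧ A.card ≤ Fintype.card ι ∧
      gadgetStair h = ⋃ a ∈ A, upset a := by
  classical
  refine ⟨Finset.univ.image fun x => gadgetPt (gadgetPos x) (h x),
    Finset.univ_nonempty.image _, Finset.card_image_le, ?_⟩
  simp [gadgetStair, Set.iUnion_exists]

theorem dirDist_gadgetStair {f g : ι → ℝ} {c : ℝ} (hc : 0 ≤ c) (hle : ∀ x, g x - f x ≤ c)
    (x₀ : ι) (hx₀ : g x₀ - f x₀ = c) (hspread : ∀ x, g x₀ ≤ g x + 4) :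
    dirDist (gadgetStair f) (gadgetStair g) = c := by
  refine dirDist_iUnion_upset_eq hc (fun x => ?_) x₀ fun x ε hx => ?_
  · rw [gadgetPt_le_add_iff, sub_self, abs_zero]
    linarith [hle x]
  · rw [gadgetPt_le_add_iff] at hx
    by_cases hxx₀ : x = x₀
    · subst hxx₀
      rw [sub_self, abs_zero] at hx
      linarith
    · linarith [four_le_abs_gadgetPos_sub hxx₀, hspread x]

end GadgetStair

section Heights

variable {n : ℕ}

open Classical in
noncomputable def gap (R : Set (Fin n × Fin n)) (k l : Fin n) : ℝ :=
  if (k, l) ∈ R then 3 else 1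

theorem one_le_gap (R : Set (Fin n × Fin n)) (k l : Fin n) : 1 ≤ gap R k l := by
  unfold gap; split_ifs <;> norm_num

theorem gap_le_three (R : Set (Fin n × Fin n)) (k l : Fin n) : gap R k l ≤ 3 := by
  unfold gap; split_ifs <;> norm_num

noncomputable def srcHgt (R : Set (Fin n × Fin n)) (x : Fin n × Fin n) (i : Fin n) : ℝ :=
  if i = x.1 then 0 else gap R x.1 x.2 - 1

noncomputable def tgtHgt (R : Set (Fin n × Fin n)) (x : Fin n × Fin n) (j : Fin n) : ℝ :=
  if j = x.2 then gap R x.1 x.2 else gap R x.1 x.2 - 2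

@[simp]
theorem srcHgt_self (R : Set (Fin n × Fin n)) (k l : Fin n) : srcHgt R (k, l) k = 0 := by
  simp [srcHgt]

@[simp]
theorem tgtHgt_self (R : Set (Fin n × Fin n)) (k l : Fin n) : tgtHgt R (k, l) l = gap R k l := by
  simp [tgtHgt]

theorem neg_one_le_srcHgt (R : Set (Fin n × Fin n)) (x : Fin n × Fin n) (i : Fin n) :
    -1 ≤ srcHgt R x i := by
  unfold srcHgt; split_ifs <;> linarith [one_le_gap R x.1 x.2]

theorem neg_one_le_tgtHgt (R : Set (Fin n × Fin n)) (x : Fin n × Fin n) (j : Fin n) :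
    -1 ≤ tgtHgt R x j := by
  unfold tgtHgt; split_ifs <;> linarith [one_le_gap R x.1 x.2]

theorem tgtHgt_sub_srcHgt_le_gap (R : Set (Fin n × Fin n)) (x : Fin n × Fin n) (i j : Fin n) :
    tgtHgt R x j - srcHgt R x i ≤ gap R i j := by
  obtain ⟨k, l⟩ := x
  have := one_le_gap R i j
  have := gap_le_three R k l
  unfold tgtHgt srcHgt
  split_ifs with hj hi hi <;> (try subst hi) <;> (try subst hj) <;> linarith

theorem srcHgt_sub_tgtHgt_le_one (R : Set (Fin n × Fin n)) (x : Fin n × Fin n) (i j : Fin n) :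
    srcHgt R x j - tgtHgt R x i ≤ 1 := by
  have := one_le_gap R x.1 x.2
  have := gap_le_three R x.1 x.2
  unfold srcHgt tgtHgt
  split_ifs <;> linarith

noncomputable def stairS (P Q : Set (Fin n × Fin n)) (i : Fin n) : Set (ℝ × ℝ) :=
  gadgetStair (Sum.elim (srcHgt P · i) (tgtHgt Q · i))

noncomputable def stairT (P Q : Set (Fin n × Fin n)) (j : Fin n) : Set (ℝ × ℝ) :=
  gadgetStair (Sum.elim (tgtHgt P · j) (srcHgt Q · j))

theorem dirDist_stairS_stairT (P Q : Set (Fin n × Fin n)) (i j : Fin n) :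
    dirDist (stairS P Q i) (stairT P Q j) = gap P i j := by
  refine dirDist_gadgetStair (by linarith [one_le_gap P i j]) ?_ (.inl (i, j)) (by simp) ?_
  · rintro (x | x) <;> dsimp only [Sum.elim_inl, Sum.elim_inr]
    · exact tgtHgt_sub_srcHgt_le_gap P x i j
    · linarith [srcHgt_sub_tgtHgt_le_one Q x i j, one_le_gap P i j]
  · rintro (x | x) <;> dsimp only [Sum.elim_inl, Sum.elim_inr] <;> rw [tgtHgt_self]
    · linarith [neg_one_le_tgtHgt P x j, gap_le_three P i j]
    · linarith [neg_one_le_srcHgt Q x j, gap_le_three P i j]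

theorem dirDist_stairT_stairS (P Q : Set (Fin n × Fin n)) (i j : Fin n) :
    dirDist (stairT P Q j) (stairS P Q i) = gap Q j i := by
  refine dirDist_gadgetStair (by linarith [one_le_gap Q j i]) ?_ (.inr (j, i)) (by simp) ?_
  · rintro (x | x) <;> dsimp only [Sum.elim_inl, Sum.elim_inr]
    · linarith [srcHgt_sub_tgtHgt_le_one P x j i, one_le_gap Q j i]
    · exact tgtHgt_sub_srcHgt_le_gap Q x j i
  · rintro (x | x) <;> dsimp only [Sum.elim_inl, Sum.elim_inr] <;> rw [tgtHgt_self]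
    · linarith [neg_one_le_srcHgt P x i, gap_le_three Q j i]
    · linarith [neg_one_le_tgtHgt Q x i, gap_le_three Q j i]

end Heights

theorem stmt_11_general (n : ℕ) (P Q : Set (Fin n × Fin n)) :
    ∃ S T : Fin n → Set (ℝ × ℝ),
      (∀ i, ∃ A : Finset (ℝ × ℝ),
        A.Nonempty ∧ A.card ≤ 4*n^2+1 ∧ S i = ⋃ a ∈ A, upset a) ∧
      (∀ j, ∃ A : Finset (ℝ × ℝ),
        A.Nonempty ∧ A.card ≤ 4*n^2+1 ∧ T j = ⋃ a ∈ A, upset a) ∧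
      (∀ i j, ((i, j) ∈ P → dirDist (S i) (T j) = 3) ∧
              ((i, j) ∉ P → dirDist (S i) (T j) = 1) ∧
              ((j, i) ∈ Q → dirDist (T j) (S i) = 3) ∧
              ((j, i) ∉ Q → dirDist (T j) (S i) = 1)) := by
  have hcard : Fintype.card ((Fin n × Fin n) ⊕ (Fin n × Fin n)) ≤ 4 * n ^ 2 + 1 := by
    simp only [Fintype.card_sum, Fintype.card_prod, Fintype.card_fin]
    nlinarith
  have hgens : ∀ (k : Fin n) (h : (Fin n × Fin n) ⊕ (Fin n × Fin n) → ℝ), ∃ A : Finset (ℝ × ℝ),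
      A.Nonempty ∧ A.card ≤ 4 * n ^ 2 + 1 ∧ gadgetStair h = ⋃ a ∈ A, upset a := by
    intro k h
    have : Nonempty ((Fin n × Fin n) ⊕ (Fin n × Fin n)) := ⟨.inl (k, k)⟩
    obtain ⟨A, hA, hcardA, hAeq⟩ := exists_finset_gadgetStair h
    exact ⟨A, hA, hcardA.trans hcard, hAeq⟩
  refine ⟨stairS P Q, stairT P Q, fun i => hgens i _, fun j => hgens j _, fun i j => ?_⟩
  rw [dirDist_stairS_stairT, dirDist_stairT_stairS]
  refine ⟨fun h => ?_, fun h => ?_, fun h => ?_, fun h => ?_⟩ <;> simp [gap, h]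

/-- **Construction of the staircases.** For every `n ≥ 1` and `P, Q ⊆ [n]×[n]` there are
staircases `S_1,…,S_n`, `T_1,…,T_n`, each generated by at most `4n²+1` points, realizing
directed shift distance `3` on `P` (resp. `Q`) and `1` otherwise. -/
theorem stmt_11 (n : ℕ) (hn : 1 ≤ n) (P Q : Set (Fin n × Fin n)) :
    ∃ S T : Fin n → Set (ℝ × ℝ),
      (∀ i, ∃ A : Finset (ℝ × ℝ),
        A.Nonempty ∧ A.card ≤ 4*n^2+1 ∧ S i = ⋃ a ∈ A, upset a) ∧
      (∀ j, ∃ A : Finset (ℝ × ℝ),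
        A.Nonempty ∧ A.card ≤ 4*n^2+1 ∧ T j = ⋃ a ∈ A, upset a) ∧
      (∀ i j, ((i, j) ∈ P → dirDist (S i) (T j) = 3) ∧
              ((i, j) ∉ P → dirDist (S i) (T j) = 1) ∧
              ((j, i) ∈ Q → dirDist (T j) (S i) = 3) ∧
              ((j, i) ∉ Q → dirDist (T j) (S i) = 1)) :=
  stmt_11_general n P Q
end

section
/- Let M and N be persistence modules over ℝ² and ε ≥ 0. If f : M → N^ε is injective (i.e., every f_p is injective) and has 2ε-trivial cokernel, then there exists a morphism g : N → M^ε such that f and g form an ε-interleaving. -/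
variable {F : Type} [Field F]

/-
Since `f_{p+ε}` is injective it is an isomorphism onto its image, and the `2ε`-trivial cokernel
says that this image contains the image of `N_p → N_{p+2ε}`; so `g_p := f_{p+ε}⁻¹ ∘ N_{p→p+2ε}`
is well defined and linear. Each interleaving identity and the naturality of `g` then only have
to be checked after composing with an injective `f`, where they follow from the naturality of `f`
and functoriality of `N`.
-/

section LiftThrough

variable {R U V W : Type*} [CommRing R] [AddCommGroup U] [AddCommGroup V] [AddCommGroup W]
  [Module R U] [Module R V] [Module R W]

noncomputable def LinearMap.liftThrough (u : V →ₗ[R] W) (hu : Function.Injective u)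
    (v : U →ₗ[R] W) (h : LinearMap.range v ≤ LinearMap.range u) : U →ₗ[R] V :=
  (LinearEquiv.ofInjective u hu).symm.toLinearMap ∘ₗ
    v.codRestrict (LinearMap.range u) fun x => h (LinearMap.mem_range_self v x)

theorem LinearMap.comp_liftThrough (u : V →ₗ[R] W) (hu : Function.Injective u)
    (v : U →ₗ[R] W) (h : LinearMap.range v ≤ LinearMap.range u) :
    u ∘ₗ u.liftThrough hu v h = v := by
  ext x
  simp [LinearMap.liftThrough]

end LiftThrough

theorem le_add_shift_add_shift {ε : ℝ} (hε : 0 ≤ ε) (p : ℝ × ℝ) : p ≤ p + (ε, ε) + (ε, ε) := by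
  constructor <;> simp <;> linarith

theorem PersMod.map_comp_map (N : PersMod F) {p q r : ℝ × ℝ} (hpq : p ≤ q) (hqr : q ≤ r)
    (hpr : p ≤ r) : N.map hqr ∘ₗ N.map hpq = N.map hpr :=
  N.map_comp hpq hqr

section Shift

variable {M N : PersMod F} {ε : ℝ}

-- `q + (2 * ε, 2 * ε)` and `q + (ε, ε) + (ε, ε)` are equal but not definitionally so.
theorem PersMod.map_mem_range_of_eq (f : ∀ p, M.space p →ₗ[F] N.space (p + (ε, ε)))
    {p q r : ℝ × ℝ} (hqr : q = r) {y : N.space p} (h : p ≤ q + (ε, ε))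
    (hy : N.map h y ∈ LinearMap.range (f q)) (h' : p ≤ r + (ε, ε)) :
    N.map h' y ∈ LinearMap.range (f r) := by
  subst hqr
  exact hy

theorem TrivialCokerS.range_map_le (f : ∀ p, M.space p →ₗ[F] N.space (p + (ε, ε)))
    (hcok : TrivialCokerS M N ε (2 * ε) f) (p : ℝ × ℝ) (h : p ≤ p + (ε, ε) + (ε, ε)) :
    LinearMap.range (N.map h) ≤ LinearMap.range (f (p + (ε, ε))) := by
  rintro _ ⟨y, rfl⟩
  obtain ⟨q, rfl⟩ : ∃ q, p = q + (ε, ε) := ⟨p - (ε, ε), by abel⟩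
  have hq : q + (2 * ε, 2 * ε) = q + (ε, ε) + (ε, ε) := by
    rw [add_assoc]; congr 1; ext <;> simp <;> ring
  have h' : q + (ε, ε) ≤ q + (2 * ε, 2 * ε) + (ε, ε) := by rw [hq]; exact h
  obtain ⟨x, hx⟩ := hcok q y h'
  exact PersMod.map_mem_range_of_eq f hq h' ⟨x, hx⟩ h

end Shift

theorem stmt_13_general (F : Type) [Field F] (M N : PersMod F) (ε : ℝ) (hε : 0 ≤ ε)
    (f : ∀ p, M.space p →ₗ[F] N.space (p + (ε, ε)))
    (hf : IsHomShift M N ε f)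
    (hinj : ∀ p : ℝ × ℝ, Function.Injective (f p))
    (hcok : TrivialCokerS M N ε (2*ε) f) :
    ∃ g, IsInterleaving M N ε f g := by
  have hle := le_add_shift_add_shift hε
  let g p := (f (p + (ε, ε))).liftThrough (hinj _) (N.map (hle p)) (hcok.range_map_le f p _)
  have hfg p : f (p + (ε, ε)) ∘ₗ g p = N.map (hle p) := LinearMap.comp_liftThrough ..
  refine ⟨g, hf, fun p q hpq => ?_, fun p _ => ?_, fun p _ => hfg p⟩
  · rw [← LinearMap.cancel_left (hinj (q + (ε, ε))), ← LinearMap.comp_assoc, ← hf,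
      LinearMap.comp_assoc, hfg, ← LinearMap.comp_assoc, hfg, N.map_comp_map,
      N.map_comp_map _ _ (hpq.trans (hle q))]
  · rw [← LinearMap.cancel_left (hinj (p + (ε, ε) + (ε, ε))), ← LinearMap.comp_assoc, hfg, hf]

/-- **Injective morphisms with `2ε`-trivial cokernel give interleavings.** If
`f : M → N^ε` is an injective morphism with `2ε`-trivial cokernel, then there is a
morphism `g : N → M^ε` such that `(f, g)` is an `ε`-interleaving. -/
theorem stmt_13 (F : Type) [Field F] [Fintype F] (M N : PersMod F) (ε : ℝ) (hε : 0 ≤ ε)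
    (f : ∀ p, M.space p →ₗ[F] N.space (p + (ε, ε)))
    (hf : IsHomShift M N ε f)
    (hinj : ∀ p : ℝ × ℝ, Function.Injective (f p))
    (hcok : TrivialCokerS M N ε (2*ε) f) :
    ∃ g, IsInterleaving M N ε f g :=
  stmt_13_general F M N ε hε f hf hinj hcok
end

section
/- Let M and N be persistence modules over ℝ² and ε ≥ 0. If there exists a morphism f : M → N^ε with ε-trivial kernel and ε-trivial cokernel, then M and N are ε-interleaved. -/
variable {F : Type} [Field F]

/-! Triviality of the cokernel says that `N_{q → q+ε}` factors through `f_q`, so over a field there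
is a linear lift `σ_q : N_q → M_q` with `f_q ∘ σ_q = N_{q → q+ε}`; take `g_q = M_{q → q+ε} ∘ σ_q`.
Triviality of the kernel says that `M_{q → q+ε} x` only depends on `f_q x`, and each interleaving
identity follows by comparing both sides after applying `f`. -/

theorem LinearMap.exists_comp_eq_of_range_le {K U V W : Type*} [DivisionRing K]
    [AddCommGroup U] [Module K U] [AddCommGroup V] [Module K V] [AddCommGroup W] [Module K W]
    (φ : V →ₗ[K] W) (ψ : U →ₗ[K] W) (h : range ψ ≤ range φ) :
    ∃ σ : U →ₗ[K] V, φ ∘ₗ σ = ψ := by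
  obtain ⟨σ, hσ⟩ := Module.projective_lifting_property φ.rangeRestrict
    (ψ.codRestrict (range φ) fun u => h ⟨u, rfl⟩) φ.surjective_rangeRestrict
  exact ⟨σ, ext fun u => congrArg Subtype.val (LinearMap.congr_fun hσ u)⟩

theorem le_add_diag {ε : ℝ} (hε : 0 ≤ ε) (p : ℝ × ℝ) : p ≤ p + (ε, ε) :=
  le_add_of_nonneg_right ⟨hε, hε⟩

theorem PersMod.map_map (M : PersMod F) {p q r : ℝ × ℝ} (hpq : p ≤ q) (hqr : q ≤ r)
    (x : M.space p) : M.map hqr (M.map hpq x) = M.map (hpq.trans hqr) x :=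
  LinearMap.congr_fun (M.map_comp hpq hqr) x

section

variable {M N : PersMod F} {ε : ℝ} {f : ∀ p, M.space p →ₗ[F] N.space (p + (ε, ε))}

theorem IsHomShift.map_apply (hf : IsHomShift M N ε f) {p q : ℝ × ℝ} (h : p ≤ q)
    (x : M.space p) : N.map (add_le_add_left h (ε, ε)) (f p x) = f q (M.map h x) :=
  LinearMap.congr_fun (hf h) x

theorem TrivialKerS.map_eq_of_apply_eq {δ : ℝ} (hker : TrivialKerS M N ε δ f) {p : ℝ × ℝ}
    {x x' : M.space p} (hx : f p x = f p x') (h : p ≤ p + (δ, δ)) :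
    M.map h x = M.map h x' := by
  rw [← sub_eq_zero, ← map_sub]
  exact hker p (x - x') (by rw [map_sub, hx, sub_self]) h

theorem TrivialCokerS.range_map_le_range (hcok : TrivialCokerS M N ε ε f) {q : ℝ × ℝ}
    (h : q ≤ q + (ε, ε)) : LinearMap.range (N.map h) ≤ LinearMap.range (f q) := by
  obtain ⟨p, rfl⟩ : ∃ p : ℝ × ℝ, p + (ε, ε) = q := ⟨q - (ε, ε), sub_add_cancel q _⟩
  rintro _ ⟨y, rfl⟩
  exact hcok p y h

theorem IsHomShift.isInterleaving_of_lift (hf : IsHomShift M N ε f)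
    (hker : TrivialKerS M N ε ε f) (hε : 0 ≤ ε) (σ : ∀ q, N.space q →ₗ[F] M.space q)
    (hσ : ∀ q y, f q (σ q y) = N.map (le_add_diag hε q) y) :
    IsInterleaving M N ε f fun q => M.map (le_add_diag hε q) ∘ₗ σ q := by
  refine ⟨hf, fun p q h => ?_, fun p h => ?_, fun p h => ?_⟩
  · ext y
    simp only [LinearMap.comp_apply]
    rw [M.map_map, ← M.map_map h (le_add_diag hε q)]
    refine hker.map_eq_of_apply_eq ?_ _
    rw [← hf.map_apply, hσ, hσ, N.map_map, N.map_map]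
  · ext x
    simp only [LinearMap.comp_apply]
    rw [← M.map_map (le_add_diag hε p)]
    refine hker.map_eq_of_apply_eq ?_ _
    rw [hσ, hf.map_apply]
  · ext y
    simp only [LinearMap.comp_apply]
    rw [← hf.map_apply, hσ, N.map_map]

end

theorem stmt_14_general (F : Type) [Field F] (M N : PersMod F) (ε : ℝ) (hε : 0 ≤ ε)
    (f : ∀ p, M.space p →ₗ[F] N.space (p + (ε, ε)))
    (hf : IsHomShift M N ε f)
    (hker : TrivialKerS M N ε ε f)
    (hcok : TrivialCokerS M N ε ε f) :
    Interleaved M N ε := by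
  choose σ hσ using fun q =>
    (f q).exists_comp_eq_of_range_le _ (hcok.range_map_le_range (le_add_diag hε q))
  exact ⟨f, _, hf.isInterleaving_of_lift hker hε σ fun q y => LinearMap.congr_fun (hσ q) y⟩

/-- **Morphisms with `ε`-trivial kernel and cokernel give `ε`-interleavings.** If there
is a morphism `f : M → N^ε` with `ε`-trivial kernel and `ε`-trivial cokernel, then `M`
and `N` are `ε`-interleaved. -/
theorem stmt_14 (F : Type) [Field F] [Fintype F] (M N : PersMod F) (ε : ℝ) (hε : 0 ≤ ε)
    (f : ∀ p, M.space p →ₗ[F] N.space (p + (ε, ε)))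
    (hf : IsHomShift M N ε f)
    (hker : TrivialKerS M N ε ε f)
    (hcok : TrivialCokerS M N ε ε f) :
    Interleaved M N ε :=
  stmt_14_general F M N ε hε f hf hker hcok
end

section
/- Let n ≥ 1, let M = ⊕_{i=1}^{n} k_{S_i} and N = ⊕_{j=1}^{n} k_{T_j} be direct sums of exactly n staircase modules each, and let ε ≥ 0. Then any morphism f : M → N with ε-trivial cokernel is injective (i.e., every f_p is injective). -/
variable {F : Type} [Field F]

/-! At a point `q` above all generators of all the staircases, both `M_q` and `N_q` are `Fⁿ`.
Trivial cokernel makes `f_q` surjective, since `N` has surjective internal maps up there;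
so `f_q` is an isomorphism by counting dimensions. As the internal maps of `M` are
injective, naturality `f_q ∘ M_{p→q} = N_{p→q} ∘ f_p` makes every `f_p` injective. -/

theorem exists_forall_mem_of_upClosed {ι : Type*} [Finite ι] (S : ι → Set (ℝ × ℝ))
    (hS : ∀ i, UpClosed (S i)) (hne : ∀ i, (S i).Nonempty) :
    ∃ u : ℝ × ℝ, ∀ ⦃q⦄, u ≤ q → ∀ i, q ∈ S i := by
  choose a ha using hne
  obtain ⟨u, hu⟩ := (Set.finite_range a).bddAbove
  exact ⟨u, fun q hq i => hS i ((hu ⟨i, rfl⟩).trans hq) (ha i)⟩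

theorem IsStaircase.nonempty_s15 {U : Set (ℝ × ℝ)} (hU : IsStaircase U) : U.Nonempty := by
  obtain ⟨A, ⟨a, ha⟩, rfl⟩ := hU
  exact ⟨a, Set.mem_biUnion ha (le_refl a)⟩

theorem lineAt_eq_top {U : Set (ℝ × ℝ)} {p : ℝ × ℝ} (hp : p ∈ U) : lineAt F U p = ⊤ :=
  if_pos hp

section StairSum

variable {n : ℕ} (S : Fin n → Set (ℝ × ℝ)) (hS : ∀ i, UpClosed (S i))

theorem stairSum_map_injective {p q : ℝ × ℝ} (h : p ≤ q) :
    Function.Injective ((stairSum F S hS).map h) := fun _ _ hxy =>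
  funext fun i =>
    Subtype.ext (congrArg (fun z : (stairSum F S hS).space q => valAt F (S i) q (z i)) hxy)

theorem stairSum_map_surjective {p q : ℝ × ℝ} (h : p ≤ q) (hp : ∀ i, p ∈ S i) :
    Function.Surjective ((stairSum F S hS).map h) := fun y =>
  ⟨fun i => ⟨valAt F (S i) q (y i), by rw [lineAt_eq_top (hp i)]; trivial⟩,
    funext fun i => Subtype.ext rfl⟩

instance (q : ℝ × ℝ) : FiniteDimensional F ((stairSum F S hS).space q) :=
  inferInstanceAs (FiniteDimensional F (∀ i, ↥(lineAt F (S i) q)))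

theorem finrank_stairSum_space {q : ℝ × ℝ} (hq : ∀ i, q ∈ S i) :
    Module.finrank F ((stairSum F S hS).space q) = n := by
  change Module.finrank F (∀ i, ↥(lineAt F (S i) q)) = n
  have hline : ∀ i, Module.finrank F ↥(lineAt F (S i) q) = 1 := fun i => by
    rw [lineAt_eq_top (hq i), finrank_top, Module.finrank_self]
  simp [Module.finrank_pi_fintype, hline]

end StairSum

section Morphisms

variable {M N : PersMod F}

theorem TrivialCoker.surjective_of_map_surjective {ε : ℝ}
    {f : ∀ p, M.space p →ₗ[F] N.space p} (hcok : TrivialCoker M N ε f) {p : ℝ × ℝ}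
    (h : p ≤ p + (ε, ε)) (hN : Function.Surjective (N.map h)) :
    Function.Surjective (f (p + (ε, ε))) := by
  intro y
  obtain ⟨y', rfl⟩ := hN y
  exact hcok p y' h

theorem IsHom.injective_of_injective {f : ∀ p, M.space p →ₗ[F] N.space p} (hf : IsHom M N f)
    {p q : ℝ × ℝ} (h : p ≤ q) (hM : Function.Injective (M.map h))
    (hq : Function.Injective (f q)) : Function.Injective (f p) := by
  have hcomp : Function.Injective (N.map h ∘ₗ f p) := by
    rw [hf h]
    exact hq.comp hM
  exact Function.Injective.of_comp hcomp

end Morphisms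

theorem stmt_15_general (F : Type) [Field F] (n : ℕ)
    (S T : Fin n → Set (ℝ × ℝ))
    (hS : ∀ i, IsStaircase (S i)) (hT : ∀ j, IsStaircase (T j))
    (ε : ℝ) (hε : 0 ≤ ε)
    (f : ∀ p, (stairSum F S fun i => (hS i).upClosed).space p →ₗ[F]
              (stairSum F T fun j => (hT j).upClosed).space p)
    (hf : IsHom (stairSum F S fun i => (hS i).upClosed)
            (stairSum F T fun j => (hT j).upClosed) f)
    (hcok : TrivialCoker (stairSum F S fun i => (hS i).upClosed)
            (stairSum F T fun j => (hT j).upClosed) ε f) :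
    ∀ p : ℝ × ℝ, Function.Injective (f p) := by
  obtain ⟨uS, hmemS⟩ :=
    exists_forall_mem_of_upClosed S (fun i => (hS i).upClosed) fun i => (hS i).nonempty_s15
  obtain ⟨uT, hmemT⟩ :=
    exists_forall_mem_of_upClosed T (fun j => (hT j).upClosed) fun j => (hT j).nonempty_s15
  intro p
  set r := uS ⊔ uT ⊔ p
  have hrq : r ≤ r + (ε, ε) := le_add_of_nonneg_right ⟨hε, hε⟩
  have hsurj : Function.Surjective (f (r + (ε, ε))) :=
    hcok.surjective_of_map_surjective hrq <|
      stairSum_map_surjective T _ hrq (hmemT (le_sup_right.trans le_sup_left))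
  have hinj : Function.Injective (f (r + (ε, ε))) := by
    have hle : uS ⊔ uT ≤ r + (ε, ε) := le_sup_left.trans hrq
    refine (LinearMap.injective_iff_surjective_of_finrank_eq_finrank ?_).mpr hsurj
    rw [finrank_stairSum_space S _ (hmemS (le_sup_left.trans hle)),
      finrank_stairSum_space T _ (hmemT (le_sup_right.trans hle))]
  exact hf.injective_of_injective (le_sup_right.trans hrq) (stairSum_map_injective S _ _) hinj

/-- **Morphisms with `ε`-trivial cokernel between sums of `n` staircase modules are
injective.** -/
theorem stmt_15 (F : Type) [Field F] [Fintype F] (n : ℕ) (hn : 1 ≤ n)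
    (S T : Fin n → Set (ℝ × ℝ))
    (hS : ∀ i, IsStaircase (S i)) (hT : ∀ j, IsStaircase (T j))
    (ε : ℝ) (hε : 0 ≤ ε)
    (f : ∀ p, (stairSum F S fun i => (hS i).upClosed).space p →ₗ[F]
              (stairSum F T fun j => (hT j).upClosed).space p)
    (hf : IsHom (stairSum F S fun i => (hS i).upClosed)
            (stairSum F T fun j => (hT j).upClosed) f)
    (hcok : TrivialCoker (stairSum F S fun i => (hS i).upClosed)
            (stairSum F T fun j => (hT j).upClosed) ε f) :
    ∀ p : ℝ × ℝ, Function.Injective (f p) :=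
  stmt_15_general F n S T hS hT ε hε f hf hcok
end
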